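/- arXiv:2102.06278 — 2 statements merged into one kernel-verified Lean document; each statement's English description precedes it below -/
import Mathlib

section
/- Every eigenvalue of Φ_A associated to a nonzero eigenvector C ∈ 𝒟_n satisfies λ ≤ 1 + 2τ: if Φ_A(C) = λC with C ≠ 0 and λ ≥ 0, then λ ≤ 1 + 2τ. -/
open Finset Matrix

def IsSimplex {n : ℕ} (a : Fin n → ℝ) : Prop :=
  (∀ i, 0 ≤ a i) ∧ ∑ i, a i = 1

def IsCoupling {n : ℕ} (a b : Fin n → ℝ) (P : Matrix (Fin n) (Fin n) ℝ) : Prop :=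
  (∀ i j, 0 ≤ P i j) ∧ (∀ i, ∑ j, P i j = a i) ∧ (∀ j, ∑ i, P i j = b j)

noncomputable def W {n : ℕ} (C : Matrix (Fin n) (Fin n) ℝ) (a b : Fin n → ℝ) : ℝ :=
  sInf {x | ∃ P, IsCoupling a b P ∧ x = ∑ i, ∑ j, C i j * P i j}

noncomputable def supNorm {n : ℕ} (C : Matrix (Fin n) (Fin n) ℝ) : ℝ :=
  ⨆ i, ⨆ j, |C i j|

def l1 {n : ℕ} (a b : Fin n → ℝ) : ℝ := ∑ i, |a i - b i|

noncomputable def Phi {n m : ℕ} (A : Fin m → Fin n → ℝ) (τ : ℝ)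
    (C : Matrix (Fin n) (Fin n) ℝ) : Matrix (Fin m) (Fin m) ℝ :=
  Matrix.of fun i j => W C (A i) (A j) + τ * supNorm C * l1 (A i) (A j)

def Dn {n : ℕ} (C : Matrix (Fin n) (Fin n) ℝ) : Prop :=
  (∀ i j, 0 ≤ C i j) ∧ (∀ i j, C i j = C j i) ∧ (∀ i, C i i = 0)

def DnPos {n : ℕ} (C : Matrix (Fin n) (Fin n) ℝ) : Prop :=
  Dn C ∧ ∀ i j, i ≠ j → 0 < C i j

lemma supNorm_eq_max {n : ℕ} [Nonempty (Fin n)] (C : Matrix (Fin n) (Fin n) ℝ)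
    (i₀ j₀ : Fin n) (hmax : ∀ i j, |C i j| ≤ |C i₀ j₀|) :
    supNorm C = |C i₀ j₀| := by
  apply le_antisymm
  · apply ciSup_le
    intro i
    exact ciSup_le fun j => hmax i j
  · calc |C i₀ j₀| ≤ ⨆ j, |C i₀ j| :=
          le_ciSup (f := fun j => |C i₀ j|) (Set.Finite.bddAbove (Set.finite_range _)) j₀
      _ ≤ ⨆ i, ⨆ j, |C i j| :=
          le_ciSup (f := fun i => ⨆ j, |C i j|)
            (Set.Finite.bddAbove (Set.finite_range _)) i₀

lemma W_le {n : ℕ} (C : Matrix (Fin n) (Fin n) ℝ) (hCnn : ∀ i j, 0 ≤ C i j)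
    (a b : Fin n → ℝ) (ha : IsSimplex a) (hb : IsSimplex b)
    (M : ℝ) (hM : ∀ i j, C i j ≤ M) : W C a b ≤ M := by
  have hx : (∑ i, ∑ j, C i j * (a i * b j)) ∈
      {x | ∃ P, IsCoupling a b P ∧ x = ∑ i, ∑ j, C i j * P i j} := by
    refine ⟨Matrix.of fun i j => a i * b j, ⟨?_, ?_, ?_⟩, rfl⟩
    · intro i j; exact mul_nonneg (ha.1 i) (hb.1 j)
    · intro i; simp [← Finset.mul_sum, hb.2]
    · intro j; simp [← Finset.sum_mul, ha.2]
  have hbdd : BddBelow {x | ∃ P, IsCoupling a b P ∧ x = ∑ i, ∑ j, C i j * P i j} := by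
    refine ⟨0, fun x hx => ?_⟩
    obtain ⟨P, hP, rfl⟩ := hx
    exact Finset.sum_nonneg fun i _ => Finset.sum_nonneg fun j _ =>
      mul_nonneg (hCnn i j) (hP.1 i j)
  refine le_trans (csInf_le hbdd hx) ?_
  calc (∑ i, ∑ j, C i j * (a i * b j)) ≤ ∑ i, ∑ j, M * (a i * b j) := by
        refine Finset.sum_le_sum fun i _ => Finset.sum_le_sum fun j _ => ?_
        exact mul_le_mul_of_nonneg_right (hM i j) (mul_nonneg (ha.1 i) (hb.1 j))
    _ = M := by
        simp only [← Finset.mul_sum]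
        rw [← Finset.sum_mul]
        simp [ha.2, hb.2, ← Finset.mul_sum]

lemma l1_le_two {n : ℕ} (a b : Fin n → ℝ) (ha : IsSimplex a) (hb : IsSimplex b) :
    l1 a b ≤ 2 := by
  have : l1 a b ≤ ∑ i, (|a i| + |b i|) :=
    Finset.sum_le_sum fun i _ => abs_sub (a i) (b i)
  calc l1 a b ≤ ∑ i, (|a i| + |b i|) := this
    _ = ∑ i, a i + ∑ i, b i := by
        rw [Finset.sum_add_distrib]
        congr 1 <;> [skip; skip] <;>
          exact Finset.sum_congr rfl fun i _ => abs_of_nonneg (by first | exact ha.1 i | exact hb.1 i)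
    _ = 2 := by rw [ha.2, hb.2]; norm_num

theorem eigenvalue_bound {n : ℕ} (A : Fin n → Fin n → ℝ)
    (hA : ∀ i, IsSimplex (A i)) (τ : ℝ) (hτ : 0 ≤ τ)
    (C : Matrix (Fin n) (Fin n) ℝ) (hC : Dn C) (hC0 : C ≠ 0)
    (lam : ℝ) (hlam : 0 ≤ lam) (heig : Phi A τ C = lam • C) :
    lam ≤ 1 + 2 * τ := by
  obtain ⟨i₁, j₁, hne⟩ : ∃ i j, C i j ≠ 0 := by
    by_contra h
    push_neg at h
    exact hC0 (by ext i j; simpa using h i j)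
  have : Nonempty (Fin n) := ⟨i₁⟩
  obtain ⟨⟨i₀, j₀⟩, hmax⟩ := Finite.exists_max (fun p : Fin n × Fin n => |C p.1 p.2|)
  have hmax' : ∀ i j, |C i j| ≤ |C i₀ j₀| := fun i j => hmax (i, j)
  have hMpos : 0 < C i₀ j₀ := by
    have h1 : 0 < |C i₁ j₁| := abs_pos.mpr hne
    have := lt_of_lt_of_le h1 (hmax' i₁ j₁)
    rwa [abs_of_nonneg (hC.1 i₀ j₀)] at this
  have hsup : supNorm C = C i₀ j₀ := by
    rw [supNorm_eq_max C i₀ j₀ hmax', abs_of_nonneg (hC.1 i₀ j₀)]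
  have heq : W C (A i₀) (A j₀) + τ * supNorm C * l1 (A i₀) (A j₀) = lam * C i₀ j₀ := by
    have := congrFun (congrFun heig i₀) j₀
    simpa [Phi] using this
  have hW : W C (A i₀) (A j₀) ≤ C i₀ j₀ := by
    refine W_le C hC.1 _ _ (hA i₀) (hA j₀) _ fun i j => ?_
    have := hmax' i j
    rwa [abs_of_nonneg (hC.1 i j), abs_of_nonneg (hC.1 i₀ j₀)] at this
  have hl1 : l1 (A i₀) (A j₀) ≤ 2 := l1_le_two _ _ (hA i₀) (hA j₀)
  have key : lam * C i₀ j₀ ≤ (1 + 2 * τ) * C i₀ j₀ := by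
    rw [← heq, hsup]
    have h2 : τ * C i₀ j₀ * l1 (A i₀) (A j₀) ≤ τ * C i₀ j₀ * 2 :=
      mul_le_mul_of_nonneg_left hl1 (mul_nonneg hτ hMpos.le)
    nlinarith
  exact le_of_mul_le_mul_right (by linarith [key]) hMpos
end

section
/- For n = m = 2 and two distinct histograms a_1 ≠ a_2 in Σ_2, the matrix C = [[0,1],[1,0]] is an eigenvector of Φ_A with eigenvalue (1/2 + τ)‖a_1 − a_2‖₁. -/
open Finset Matrix

lemma supNorm_C : supNorm !![(0:ℝ), 1; 1, 0] = 1 := by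
  apply le_antisymm
  · apply ciSup_le; intro i
    apply ciSup_le; intro j
    fin_cases i <;> fin_cases j <;> norm_num
  · calc (1:ℝ) = |!![(0:ℝ),1;1,0] 0 1| := by norm_num
    _ ≤ ⨆ j, |!![(0:ℝ),1;1,0] 0 j| :=
        le_ciSup (f := fun j : Fin 2 => |!![(0:ℝ),1;1,0] 0 j|)
          (Set.Finite.bddAbove (Set.finite_range _)) (1 : Fin 2)
    _ ≤ supNorm !![(0:ℝ), 1; 1, 0] :=
        le_ciSup (f := fun i : Fin 2 => ⨆ j, |!![(0:ℝ),1;1,0] i j|)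
          (Set.Finite.bddAbove (Set.finite_range _)) (0 : Fin 2)

lemma Wval (a b : Fin 2 → ℝ) (ha : IsSimplex a) (hb : IsSimplex b) :
    W !![(0:ℝ), 1; 1, 0] a b = |a 0 - b 0| := by
  obtain ⟨ha0, ha1⟩ := ha
  obtain ⟨hb0, hb1⟩ := hb
  rw [Fin.sum_univ_two] at ha1 hb1
  have key : ∀ x ∈ {x | ∃ P, IsCoupling a b P ∧
      x = ∑ i, ∑ j, !![(0:ℝ),1;1,0] i j * P i j}, |a 0 - b 0| ≤ x := by
    rintro x ⟨P, ⟨hP, hrow, hcol⟩, rfl⟩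
    have h1 := hrow 0; have h2 := hcol 0
    rw [Fin.sum_univ_two] at h1 h2
    have p01 := hP 0 1; have p10 := hP 1 0
    simp only [Fin.sum_univ_two]
    norm_num
    rw [abs_sub_le_iff]
    constructor <;> linarith
  have hmem : |a 0 - b 0| ∈ {x | ∃ P, IsCoupling a b P ∧
      x = ∑ i, ∑ j, !![(0:ℝ),1;1,0] i j * P i j} := by
    refine ⟨!![min (a 0) (b 0), a 0 - min (a 0) (b 0);
              b 0 - min (a 0) (b 0), min (a 1) (b 1)], ⟨?_, ?_, ?_⟩, ?_⟩
    · intro i j; fin_cases i <;> fin_cases j <;> simp <;>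
        first
          | exact le_min (ha0 0) (hb0 0)
          | exact min_le_left _ _
          | exact min_le_right _ _
          | exact le_min (ha0 1) (hb0 1)
          | exact ⟨ha0 0, hb0 0⟩
          | exact ⟨ha0 1, hb0 1⟩
    · intro i; fin_cases i
      · simp [Fin.sum_univ_two]
      · simp [Fin.sum_univ_two]
        rcases le_total (a 0) (b 0) with h | h
        · rw [min_eq_left h, min_eq_right (by linarith : b 1 ≤ a 1)]; linarith
        · rw [min_eq_right h, min_eq_left (by linarith : a 1 ≤ b 1)]; linarith
    · intro j; fin_cases j
      · simp [Fin.sum_univ_two]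
      · simp [Fin.sum_univ_two]
        rcases le_total (a 0) (b 0) with h | h
        · rw [min_eq_left h, min_eq_right (by linarith : b 1 ≤ a 1)]; linarith
        · rw [min_eq_right h, min_eq_left (by linarith : a 1 ≤ b 1)]; linarith
    · simp only [Fin.sum_univ_two]
      norm_num
      rcases le_total (a 0) (b 0) with h | h
      · rw [min_eq_left h, abs_of_nonpos (by linarith)]; ring
      · rw [min_eq_right h, abs_of_nonneg (by linarith)]; ring
  exact le_antisymm (csInf_le ⟨_, key⟩ hmem) (le_csInf ⟨_, hmem⟩ key)

lemma l1val (a b : Fin 2 → ℝ) (ha : IsSimplex a) (hb : IsSimplex b) :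
    l1 a b = 2 * |a 0 - b 0| := by
  have ha1 := ha.2; have hb1 := hb.2
  rw [Fin.sum_univ_two] at ha1 hb1
  rw [l1, Fin.sum_univ_two]
  have : a 1 - b 1 = -(a 0 - b 0) := by linarith
  rw [this, abs_neg]; ring

theorem two_by_two_eigenvector (a₁ a₂ : Fin 2 → ℝ)
    (h₁ : IsSimplex a₁) (h₂ : IsSimplex a₂) (hne : a₁ ≠ a₂)
    (τ : ℝ) (hτ : 0 ≤ τ) :
    Phi ![a₁, a₂] τ !![0, 1; 1, 0] =
      ((1 / 2 + τ) * l1 a₁ a₂) • !![0, 1; 1, 0] := by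
  have hW12 := Wval a₁ a₂ h₁ h₂
  have hW21 := Wval a₂ a₁ h₂ h₁
  have hW11 := Wval a₁ a₁ h₁ h₁
  have hW22 := Wval a₂ a₂ h₂ h₂
  have hl12 := l1val a₁ a₂ h₁ h₂
  have hl21 := l1val a₂ a₁ h₂ h₁
  have hl11 := l1val a₁ a₁ h₁ h₁
  have hl22 := l1val a₂ a₂ h₂ h₂
  have habs : |a₂ 0 - a₁ 0| = |a₁ 0 - a₂ 0| := abs_sub_comm _ _
  ext i j
  fin_cases i <;> fin_cases j <;>
    simp [Phi, supNorm_C, hW12, hW21, hW11, hW22, hl12, hl21, hl11, hl22, habs] <;>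
    ring
end
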